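/- For natural numbers n and a real R ≥ 0, define M(n,R) = n(n−1)/2 + nR. For every j ≥ 2n with n > R, and any real numbers t_s ∈ (0,1] for s = 1,...,j (representing the products ∏_{r=s}^{i−1} k_r/(k_r+1)), the inequality Σ_{s=1}^{j} [t_s · max{0, 2n − s}] + 2n · Σ_{s=1}^{j} (1 − t_s) ≥ M(n,R) holds. In fact the left side is at least Σ_{s=1}^{2n−1}(2n − s·t_s) ≥ Σ_{s=1}^{2n−1}(2n − s) = n(2n−1) > M(n,R). -/
import Mathlib


/-- the key inequality (*) from the simple counterexample construction.
`M(n,R) = n(n-1)/2 + nR`.  For `j ≥ 2n`, `0 ≤ R < n`, and reals `t s ∈ (0,1]`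
(for `s = 1,...,j`, representing the products `∏_{r=s}^{i-1} k_r/(k_r+1)`):
`Σ_{s=1}^j t_s·max{0, 2n−s} + 2n·Σ_{s=1}^j (1−t_s) ≥ M(n,R)`. -/
theorem key_inequality_star (n j : ℕ) (R : ℝ) (hR0 : 0 ≤ R) (hRn : R < n)
    (hj : 2 * n ≤ j) (t : ℕ → ℝ)
    (ht : ∀ s ∈ Finset.Icc 1 j, t s ∈ Set.Ioc (0 : ℝ) 1) :
    (∑ s ∈ Finset.Icc 1 j, t s * max 0 ((2 * n : ℝ) - s))
      + 2 * n * (∑ s ∈ Finset.Icc 1 j, (1 - t s))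
    ≥ (n : ℝ) * (n - 1) / 2 + n * R := by
  have hn1 : 1 ≤ n := by
    by_contra h
    interval_cases n <;> simp_all <;> linarith
  -- Step 1: LHS ≥ ∑ max 0 (2n - s)
  have step1 : (∑ s ∈ Finset.Icc 1 j, t s * max 0 ((2 * n : ℝ) - s))
      + 2 * n * (∑ s ∈ Finset.Icc 1 j, (1 - t s))
      ≥ ∑ s ∈ Finset.Icc 1 j, max 0 ((2 * n : ℝ) - s) := by
    rw [Finset.mul_sum, ← Finset.sum_add_distrib]
    apply Finset.sum_le_sum
    intro s hs
    obtain ⟨ht0, ht1⟩ := ht s hs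
    have hm0 : (0 : ℝ) ≤ max 0 ((2 * n : ℝ) - s) := le_max_left _ _
    have hm2n : max 0 ((2 * n : ℝ) - s) ≤ 2 * n := by
      have hs1 : (1 : ℝ) ≤ s := by
        exact_mod_cast (Finset.mem_Icc.mp hs).1
      apply max_le <;> [positivity; linarith]
    nlinarith [mul_nonneg (sub_nonneg.mpr ht1) (sub_nonneg.mpr hm2n)]
  -- Step 2: ∑ max ≥ n(2n-1)
  have step2 : (∑ s ∈ Finset.Icc 1 j, max 0 ((2 * n : ℝ) - s))
      ≥ (n : ℝ) * (2 * n - 1) := by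
    have hsub : Finset.Icc 1 (2 * n - 1) ⊆ Finset.Icc 1 j := by
      apply Finset.Icc_subset_Icc le_rfl
      omega
    have h1 : ∑ s ∈ Finset.Icc 1 (2 * n - 1), max 0 ((2 * n : ℝ) - s)
        ≤ ∑ s ∈ Finset.Icc 1 j, max 0 ((2 * n : ℝ) - s) :=
      Finset.sum_le_sum_of_subset_of_nonneg hsub (fun i _ _ => le_max_left _ _)
    have h2 : ∑ s ∈ Finset.Icc 1 (2 * n - 1), max 0 ((2 * n : ℝ) - s)
        = ∑ s ∈ Finset.Icc 1 (2 * n - 1), ((2 * n : ℝ) - s) := by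
      apply Finset.sum_congr rfl
      intro s hs
      have hs2 : s ≤ 2 * n := le_trans (Finset.mem_Icc.mp hs).2 (by omega)
      have : (s : ℝ) ≤ 2 * n := by exact_mod_cast hs2
      exact max_eq_right (by linarith)
    have hsum : ((∑ s ∈ Finset.Icc 1 (2 * n - 1), s) : ℕ) * 2 = 2 * n * (2 * n - 1) := by
      have hr : ∑ s ∈ Finset.range (2 * n), s = ∑ s ∈ Finset.Icc 1 (2 * n - 1), s := by
        have hset : Finset.range (2 * n) = insert 0 (Finset.Icc 1 (2 * n - 1)) := by
          ext x; simp [Finset.mem_Icc, Finset.mem_range]; omega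
        rw [hset, Finset.sum_insert (by simp)]; omega
      rw [← hr, Finset.sum_range_id_mul_two]
    have h3 : ∑ s ∈ Finset.Icc 1 (2 * n - 1), ((2 * n : ℝ) - s)
        = (n : ℝ) * (2 * n - 1) := by
      rw [Finset.sum_sub_distrib, Finset.sum_const, Nat.card_Icc]
      have hc : ∑ s ∈ Finset.Icc 1 (2 * n - 1), (s : ℝ)
          = ((∑ s ∈ Finset.Icc 1 (2 * n - 1), s : ℕ) : ℝ) := by push_cast; ring
      rw [hc]
      have hcast : ((∑ s ∈ Finset.Icc 1 (2 * n - 1), s : ℕ) : ℝ) * 2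
          = ((2 * n * (2 * n - 1) : ℕ) : ℝ) := by exact_mod_cast congrArg (Nat.cast : ℕ → ℝ) hsum
      have h2n1 : ((2 * n - 1 : ℕ) : ℝ) = 2 * (n : ℝ) - 1 := by
        push_cast [Nat.cast_sub (by omega : 1 ≤ 2 * n)]; ring
      rw [nsmul_eq_mul]
      push_cast [Nat.cast_sub (by omega : 1 ≤ 2 * n)] at hcast ⊢
      linarith
    linarith
  have hfin : (n : ℝ) * (2 * n - 1) ≥ (n : ℝ) * (n - 1) / 2 + n * R := by
    have hn1' : (1 : ℝ) ≤ n := by exact_mod_cast hn1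
    nlinarith
  linarith
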